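/- Let F := x0^9 + (x1^3 − x2^3)·(x2^3 − 1)·(1 − x1^3) ∈ ℂ[x0, x1, x2] (the dehomogenization of F_{S1} at x3 = 1), let R := ℂ[x0, x1, x2]/(F), and let m be the maximal ideal of R generated by the images of x0, x1, x2. Then in the localization of R at m, the ideal generated by the images of x1 and x0^9 − x2^6 + x2^3 is equal to the principal ideal generated by the image of x1. (This expresses that the curve D1 is a Cartier divisor of S1 at the singular point [0:0:0:1].) -/
import Mathlib

open MvPolynomial

/-- The dehomogenization of `F_{S1}` at `x3 = 1`, in `ℂ[x0, x1, x2]`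
(variables `x0 = X 0`, `x1 = X 1`, `x2 = X 2`). -/
noncomputable def F : MvPolynomial (Fin 3) ℂ :=
  X 0 ^ 9 + (X 1 ^ 3 - X 2 ^ 3) * (X 2 ^ 3 - 1) * (1 - X 1 ^ 3)

/-- The affine coordinate ring `R = ℂ[x0, x1, x2]/(F)` of `S1` near `[0:0:0:1]`. -/
noncomputable abbrev R : Type := MvPolynomial (Fin 3) ℂ ⧸ Ideal.span {F}

/-- The ideal of `R` generated by the images of `x0, x1, x2`. -/
noncomputable def m : Ideal R :=
  Ideal.span {Ideal.Quotient.mk (Ideal.span {F}) (X 0),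
    Ideal.Quotient.mk (Ideal.span {F}) (X 1),
    Ideal.Quotient.mk (Ideal.span {F}) (X 2)}

noncomputable def I : Ideal (MvPolynomial (Fin 3) ℂ) :=
  Ideal.span {X 0, X 1, X 2}

lemma I_eq_ker : I = RingHom.ker (constantCoeff (σ := Fin 3) (R := ℂ)) := by
  have himg : (MvPolynomial.X '' (Set.univ : Set (Fin 3)) : Set (MvPolynomial (Fin 3) ℂ))
      = {X 0, X 1, X 2} := by
    ext p
    simp only [Set.image_univ, Set.mem_range, Set.mem_insert_iff, Set.mem_singleton_iff]
    constructor
    · rintro ⟨i, rfl⟩; fin_cases i <;> simp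
    · rintro (rfl | rfl | rfl) <;> exact ⟨_, rfl⟩
  ext p
  rw [I, ← himg, mem_ideal_span_X_image, RingHom.mem_ker]
  rw [show (constantCoeff p : ℂ) = coeff 0 p from rfl]
  constructor
  · intro h
    by_contra hc
    obtain ⟨i, -, hi⟩ := h 0 (mem_support_iff.mpr hc)
    simp at hi
  · intro h mo hmo
    have : mo ≠ 0 := by
      rintro rfl
      exact (mem_support_iff.mp hmo) h
    obtain ⟨i, hi⟩ := Finsupp.ne_iff.mp this
    exact ⟨i, Set.mem_univ i, by simpa using hi⟩

lemma I_max : I.IsMaximal := by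
  rw [I_eq_ker]
  exact RingHom.ker_isMaximal_of_surjective _ (fun z => ⟨C z, by simp⟩)

lemma F_mem_I : F ∈ I := by
  rw [I_eq_ker, RingHom.mem_ker, F]
  simp

lemma m_eq_map : m = I.map (Ideal.Quotient.mk (Ideal.span {F})) := by
  rw [m, I, Ideal.map_span]
  congr 1
  simp [Set.image_insert_eq]

lemma m_max : m.IsMaximal := by
  rw [m_eq_map]
  rcases Ideal.map_eq_top_or_isMaximal_of_surjective (Ideal.Quotient.mk (Ideal.span {F})) Ideal.Quotient.mk_surjective I_max with h | h
  · exfalso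
    have hc : Ideal.comap (Ideal.Quotient.mk (Ideal.span {F})) (Ideal.map (Ideal.Quotient.mk (Ideal.span {F})) I) = ⊤ := by
      rw [h, Ideal.comap_top]
    rw [Ideal.comap_map_of_surjective _ Ideal.Quotient.mk_surjective] at hc
    have h2 : Ideal.comap (Ideal.Quotient.mk (Ideal.span {F})) ⊥ ≤ I := by
      rw [← RingHom.ker_eq_comap_bot, Ideal.mk_ker, Ideal.span_le]
      simpa using F_mem_I
    exact I_max.ne_top (top_le_iff.mp (hc ▸ sup_le le_rfl h2))
  · exact h

theorem stmt_8 :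
    m.IsMaximal ∧
    ∀ (hm : m.IsPrime),
      letI : m.IsPrime := hm
      (Ideal.span {algebraMap R (Localization.AtPrime m)
          (Ideal.Quotient.mk (Ideal.span {F}) (X 1)),
        algebraMap R (Localization.AtPrime m)
          (Ideal.Quotient.mk (Ideal.span {F}) (X 0 ^ 9 - X 2 ^ 6 + X 2 ^ 3))} :
        Ideal (Localization.AtPrime m)) =
      Ideal.span {algebraMap R (Localization.AtPrime m)
          (Ideal.Quotient.mk (Ideal.span {F}) (X 1))} := by
  refine ⟨m_max, fun hm => ?_⟩
  -- key: X0^9 - X2^6 + X2^3 = F + X1 * (X1^2 * (X1^3*X2^3 - X2^6 - X1^3 + 1))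
  have key : (Ideal.Quotient.mk (Ideal.span {F})) (X 0 ^ 9 - X 2 ^ 6 + X 2 ^ 3)
      = (Ideal.Quotient.mk (Ideal.span {F})) (X 1)
        * (Ideal.Quotient.mk (Ideal.span {F})) (X 1 ^ 2 * (X 1 ^ 3 * X 2 ^ 3 - X 2 ^ 6 - X 1 ^ 3 + 1)) := by
    rw [← map_mul, Ideal.Quotient.mk_eq_mk_iff_sub_mem]
    have : (X 0 ^ 9 - X 2 ^ 6 + X 2 ^ 3 : MvPolynomial (Fin 3) ℂ)
        - X 1 * (X 1 ^ 2 * (X 1 ^ 3 * X 2 ^ 3 - X 2 ^ 6 - X 1 ^ 3 + 1)) = F := by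
      rw [F]; ring
    rw [this]
    exact Ideal.subset_span rfl
  rw [Ideal.span_insert]
  refine sup_eq_left.mpr ?_
  rw [Ideal.span_le]
  intro x hx
  rw [Set.mem_singleton_iff] at hx
  subst hx
  rw [key, map_mul]
  exact Ideal.mul_mem_right _ _ (Ideal.subset_span rfl)
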